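/- arXiv:2603.02825 — 4 statements merged into one kernel-verified Lean document; each statement's English description precedes it below -/
import Mathlib

section
/- Let G = (V,E) be an ℓ-layered DST instance, fix a terminal t ∈ T, and let x : Q → ℝ be nonnegative and satisfy Σ_{p ∈ Q(t)} x_p ≥ 1 and x_{p'} ≥ Σ_{p ∈ Q(t), p' ⊆ p} x_p for every p' ∈ Q. Then for every set S ⊆ Q of paths such that Q(t) ⊆ S and the trivial path at r is not in S, we have Σ x_p ≥ 1, where the sum ranges over all nontrivial p ∈ Q such that exactly one of p and trunc(p) belongs to S. (That is, x induces a feasible solution of all cut constraints of the group Steiner tree LP on the path tree Ḡ, for the terminal group X_t = {w_p : p ∈ Q(t)}.) -/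
/-- An `ℓ`-layered instance of the Directed Steiner Tree problem on the (finite)
vertex type `V`: a root `r`, a terminal set `T`, an edge set `E`, and a layering
function `layer` partitioning `V` into layers `V_0, …, V_ℓ` with `V_0 = {r}`,
`V_ℓ = T`, and every edge going from some layer `V_i` to `V_{i+1}`. -/
structure LayeredDST (V : Type) [Fintype V] [DecidableEq V] where
  ℓ : ℕ
  E : Finset (V × V)
  r : V
  T : Finset V
  layer : V → ℕ
  layer_le : ∀ v : V, layer v ≤ ℓ
  layer_root : ∀ v : V, layer v = 0 ↔ v = r
  layer_terminal : ∀ v : V, layer v = ℓ ↔ v ∈ T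
  edge_layer : ∀ e ∈ E, layer e.2 = layer e.1 + 1

/-- Product of `y` over the edges of a path `p` (encoded as its list of edges);
the empty product is `1`. -/
def pathProd {V : Type} (y : V × V → ℝ) (p : List (V × V)) : ℝ := (p.map y).prod

namespace LayeredDST

variable {V : Type} [Fintype V] [DecidableEq V] (G : LayeredDST V)

/-- `p` is a directed walk in `G`, encoded as its list of edges:
all edges belong to `E` and consecutive edges are incident. -/
def IsWalk (p : List (V × V)) : Prop :=
  (∀ e ∈ p, e ∈ G.E) ∧ p.Chain' (fun e f => e.2 = f.1)

/-- `p` is a directed path (walk) in `G` starting at the vertex `v`. -/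
def IsPathFrom (v : V) (p : List (V × V)) : Prop :=
  G.IsWalk p ∧ ∀ e ∈ p.head?, e.1 = v

/-- `p` is a directed path in `G` starting at the root `r`. -/
def IsPath (p : List (V × V)) : Prop := G.IsPathFrom G.r p

/-- The endpoint of a path starting at the root (the root itself for the trivial path). -/
def pathEnd (p : List (V × V)) : V := (p.getLast?).elim G.r Prod.snd

/-- `Q`: the set of all directed paths starting at the root. -/
def Q : Set (List (V × V)) := {p | G.IsPath p}

/-- `Q(v)`: the set of directed paths from the root `r` to `v`. -/
def Qv (v : V) : Set (List (V × V)) := {p | G.IsPath p ∧ G.pathEnd p = v}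

/-- `Q(e)`: the set of directed paths from the root whose last edge is `e`. -/
def Qe (e : V × V) : Set (List (V × V)) := {p | G.IsPath p ∧ p.getLast? = some e}

/-- `δ^in(v)`: the set of edges of `E` entering `v`. -/
def inEdges (v : V) : Finset (V × V) := G.E.filter (fun e => e.2 = v)

/-- `δ^out(v)`: the set of edges of `E` leaving `v`. -/
def outEdges (v : V) : Finset (V × V) := G.E.filter (fun e => e.1 = v)

/-- Feasibility for the linear program (DST-LP1): nonnegativity, the covering
constraints `∑_{p ∈ Q(t)} x_p ≥ 1` for each terminal `t`, and the subpath
constraints `∑_{p ∈ Q(t), p' ⊆ p} x_p ≤ x_{p'}` for each terminal `t` and `p' ∈ Q`. -/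
def FeasibleLP1 (x : List (V × V) → ℝ) : Prop :=
  (∀ p ∈ G.Q, 0 ≤ x p) ∧
  (∀ t ∈ G.T, 1 ≤ ∑ᶠ p ∈ G.Qv t, x p) ∧
  (∀ t ∈ G.T, ∀ p' ∈ G.Q, (∑ᶠ p ∈ {p ∈ G.Qv t | p' <+: p}, x p) ≤ x p')

/-- The objective function of (DST-LP1): `∑_{e ∈ E} ∑_{p ∈ Q(e)} c_e · x_p`. -/
noncomputable def objLP1 (c : V × V → ℝ) (x : List (V × V) → ℝ) : ℝ :=
  ∑ e ∈ G.E, ∑ᶠ p ∈ G.Qe e, c e * x p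

end LayeredDST

/-!
Every path `q ∈ Q(t)` lies in `S`, while its trivial prefix does not, so the shortest prefix
of `q` lying in `S` crosses the cut. Grouping the paths of `Q(t)` by this prefix `p`, the
subpath constraint for `p` bounds the `x`-mass of the group by `x_p`; hence the mass `≥ 1`
of `Q(t)` is dominated by the `x`-mass of the cut.
-/

section FinsumMono

variable {ι κ M : Type*} [AddCommMonoid M] [PartialOrder M] [IsOrderedAddMonoid M]

theorem finsum_mem_le_finsum_mem_of_subset {x : ι → M} {s t : Set ι} (ht : t.Finite)
    (hst : s ⊆ t) (hx : ∀ a ∈ t, 0 ≤ x a) : ∑ᶠ a ∈ s, x a ≤ ∑ᶠ a ∈ t, x a := by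
  classical
  obtain ⟨s', rfl⟩ := (ht.subset hst).exists_finset_coe
  obtain ⟨t', rfl⟩ := ht.exists_finset_coe
  rw [finsum_mem_coe_finset, finsum_mem_coe_finset]
  exact Finset.sum_le_sum_of_subset_of_nonneg (Finset.coe_subset.mp hst) fun a ha _ =>
    hx a ha

theorem finsum_mem_le_finsum_mem_of_mapsTo {x : ι → M} {y : κ → M} {s : Set ι} {t : Set κ}
    {g : ι → κ} (hs : s.Finite) (ht : t.Finite) (hg : Set.MapsTo g s t)
    (hfiber : ∀ b ∈ t, ∑ᶠ a ∈ {a ∈ s | g a = b}, x a ≤ y b) :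
    ∑ᶠ a ∈ s, x a ≤ ∑ᶠ b ∈ t, y b := by
  classical
  obtain ⟨s', rfl⟩ := hs.exists_finset_coe
  obtain ⟨t', rfl⟩ := ht.exists_finset_coe
  rw [finsum_mem_coe_finset, finsum_mem_coe_finset, ← Finset.sum_fiberwise_of_maps_to hg]
  refine Finset.sum_le_sum fun b hb => ?_
  rw [← finsum_mem_coe_finset, Finset.coe_filter]
  exact hfiber b hb

end FinsumMono

namespace List

variable {α : Type*} {S : Set (List α)} {q : List α}

open Classical in
noncomputable def shortestPrefixIn (S : Set (List α)) (q : List α) : List α :=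
  if h : ∃ n, q.take n ∈ S then q.take (Nat.find h) else q

theorem shortestPrefixIn_prefix : shortestPrefixIn S q <+: q := by
  unfold shortestPrefixIn
  split_ifs
  exacts [take_prefix _ _, prefix_refl q]

theorem shortestPrefixIn_mem (hq : q ∈ S) : shortestPrefixIn S q ∈ S := by
  classical
  have h : ∃ n, q.take n ∈ S := ⟨q.length, by rwa [take_length]⟩
  simpa only [shortestPrefixIn, dif_pos h] using Nat.find_spec h

theorem dropLast_shortestPrefixIn_notMem (hq : q ∈ S) (hnil : [] ∉ S) :
    (shortestPrefixIn S q).dropLast ∉ S := by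
  classical
  have h : ∃ n, q.take n ∈ S := ⟨q.length, by rwa [take_length]⟩
  rw [shortestPrefixIn, dif_pos h]
  have hle : Nat.find h ≤ q.length := Nat.find_min' h (by rwa [take_length])
  have hpos : Nat.find h ≠ 0 := fun h0 => hnil (by simpa [h0] using Nat.find_spec h)
  have hdrop : (q.take (Nat.find h)).dropLast = q.take (Nat.find h - 1) := by
    rcases hle.lt_or_eq with hlt | heq
    · exact dropLast_take hlt
    · rw [heq, take_length, dropLast_eq_take]
  rw [hdrop]
  exact Nat.find_min h (by omega)

end List

namespace LayeredDST

variable {V : Type} [Fintype V] [DecidableEq V] {G : LayeredDST V} {v : V}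
  {p q : List (V × V)}

theorem IsPathFrom.of_cons {a : V × V} (hp : G.IsPathFrom v (a :: q)) :
    G.IsPathFrom a.2 q := by
  obtain ⟨⟨hE, hchain⟩, -⟩ := hp
  refine ⟨⟨fun e he => hE e (List.mem_cons_of_mem a he), hchain.tail⟩, fun e he => ?_⟩
  cases q with
  | nil => simp at he
  | cons b q =>
    obtain rfl : b = e := by simpa using he
    exact (List.isChain_cons_cons.mp hchain).1.symm

theorem IsPathFrom.layer_add_length_le (hp : G.IsPathFrom v p) : G.layer v + p.length ≤ G.ℓ := by
  induction p generalizing v with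
  | nil => simpa using G.layer_le v
  | cons a q ih =>
    have hlayer : G.layer a.2 = G.layer v + 1 :=
      hp.2 a rfl ▸ G.edge_layer a (hp.1.1 a List.mem_cons_self)
    have := ih hp.of_cons
    rw [List.length_cons]
    omega

theorem IsPathFrom.of_prefix (hp : G.IsPathFrom v p) (hqp : q <+: p) :
    G.IsPathFrom v q := by
  obtain ⟨⟨hE, hchain⟩, hhead⟩ := hp
  refine ⟨⟨fun e he => hE e (hqp.sublist.mem he), hchain.prefix hqp⟩, fun e he => hhead e ?_⟩
  obtain ⟨r, rfl⟩ := hqp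
  simp [List.head?_append, Option.mem_def.mp he]

variable (G)

theorem length_le_of_mem_Q (hp : p ∈ G.Q) : p.length ≤ G.ℓ := by
  have := IsPathFrom.layer_add_length_le hp
  rw [(G.layer_root G.r).2 rfl] at this
  omega

theorem finite_Q : G.Q.Finite :=
  (List.finite_length_le (V × V) G.ℓ).subset fun _ => G.length_le_of_mem_Q

end LayeredDST

theorem dst_lp1_satisfies_gst_cuts_general
    (V : Type) [Fintype V] [DecidableEq V] (G : LayeredDST V)
    (t : V) (x : List (V × V) → ℝ)
    (hx0 : ∀ p ∈ G.Q, 0 ≤ x p)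
    (hcov : 1 ≤ ∑ᶠ p ∈ G.Qv t, x p)
    (hsub : ∀ p' ∈ G.Q, (∑ᶠ p ∈ {p ∈ G.Qv t | p' <+: p}, x p) ≤ x p')
    (S : Set (List (V × V))) (hQtS : G.Qv t ⊆ S)
    (htriv : ([] : List (V × V)) ∉ S) :
    1 ≤ ∑ᶠ p ∈ {p | p ∈ G.Q ∧ p ≠ [] ∧ Xor' (p ∈ S) (p.dropLast ∈ S)}, x p := by
  have hQt_finite : (G.Qv t).Finite := G.finite_Q.subset fun _ hq => hq.1
  refine hcov.trans (finsum_mem_le_finsum_mem_of_mapsTo (g := List.shortestPrefixIn S) hQt_finite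
    (G.finite_Q.subset fun _ hp => hp.1) (fun q hq => ?maps) fun p hp => ?fiber)
  case maps =>
    have hmem := List.shortestPrefixIn_mem (hQtS hq)
    exact ⟨LayeredDST.IsPathFrom.of_prefix hq.1 List.shortestPrefixIn_prefix,
      fun h => htriv (h ▸ hmem),
      Or.inl ⟨hmem, List.dropLast_shortestPrefixIn_notMem (hQtS hq) htriv⟩⟩
  case fiber =>
    calc ∑ᶠ q ∈ {q ∈ G.Qv t | List.shortestPrefixIn S q = p}, x q
        ≤ ∑ᶠ q ∈ {q ∈ G.Qv t | p <+: q}, x q :=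
          finsum_mem_le_finsum_mem_of_subset (hQt_finite.subset (Set.sep_subset _ _))
            (fun q hq => ⟨hq.1, hq.2 ▸ List.shortestPrefixIn_prefix⟩) fun q hq => hx0 q hq.1.1
      _ ≤ x p := hsub p hp.1

/-- If `x ≥ 0` satisfies the covering constraint for a terminal
`t` and all subpath constraints for `t`, then for every set `S` of paths with
`Q(t) ⊆ S ⊆ Q` not containing the trivial path, the total `x`-value of the paths
`p` crossing the cut (i.e. exactly one of `p` and `trunc(p)` lies in `S`) is at
least `1`: `x` satisfies all cut constraints of the group Steiner tree LP on the
path tree for the terminal group `X_t`. -/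
theorem dst_lp1_satisfies_gst_cuts
    (V : Type) [Fintype V] [DecidableEq V] (G : LayeredDST V)
    (t : V) (ht : t ∈ G.T) (x : List (V × V) → ℝ)
    (hx0 : ∀ p ∈ G.Q, 0 ≤ x p)
    (hcov : 1 ≤ ∑ᶠ p ∈ G.Qv t, x p)
    (hsub : ∀ p' ∈ G.Q, (∑ᶠ p ∈ {p ∈ G.Qv t | p' <+: p}, x p) ≤ x p')
    (S : Set (List (V × V))) (hSQ : S ⊆ G.Q) (hQtS : G.Qv t ⊆ S)
    (htriv : ([] : List (V × V)) ∉ S) :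
    1 ≤ ∑ᶠ p ∈ {p | p ∈ G.Q ∧ p ≠ [] ∧ Xor' (p ∈ S) (p.dropLast ∈ S)}, x p :=
  dst_lp1_satisfies_gst_cuts_general V G t x hx0 hcov hsub S hQtS htriv
end

section
/- Let G = (V,E) be an ℓ-layered DST instance, let y : E → ℝ be nonnegative, and fix an edge f = uv ∈ E with u ∈ V_i. Suppose that for every 0 < i' ≤ i, every v' ∈ V_{i'} and every directed path p'' that starts at v' and ends with the edge f, one has (Σ_{e' ∈ δ^in(v')} y_{e'}) · Π_{e'' ∈ p''} y_{e''} ≤ Π_{e'' ∈ p''} y_{e''}. Then Σ_{p ∈ Q(f)} Π_{e ∈ p} y_e ≤ y_f. -/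
/-!
Let `P_j` be the set of paths that start in layer `j` and end with the edge `f = uv`, `u ∈ V_i`,
so that `P_0 = Q(f)` and `P_i = {[f]}`. For `j < i`, deleting the first edge maps `P_j` onto
`P_{j+1}`, and the paths over `q ∈ P_{j+1}` are the `e :: q` with `e` entering the first vertex
`v` of `q`; their total weight `(∑_{e ∈ δ^in(v)} y_e) · ∏_q y` is at most `∏_q y` by hypothesis.
Hence the total weight of `P_j` does not decrease from `j = 0` to `j = i`.
-/

lemma pathProd_cons {V : Type} (y : V × V → ℝ) (e : V × V) (p : List (V × V)) :
    pathProd y (e :: p) = y e * pathProd y p := by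
  simp [pathProd]

namespace LayeredDST

variable {V : Type} [Fintype V] [DecidableEq V] (G : LayeredDST V)

lemma isPathFrom_nil (v : V) : G.IsPathFrom v [] :=
  ⟨⟨by simp, List.isChain_nil⟩, by simp⟩

lemma isPathFrom_cons {v : V} {e : V × V} {p : List (V × V)} :
    G.IsPathFrom v (e :: p) ↔ e ∈ G.E ∧ e.1 = v ∧ G.IsPathFrom e.2 p := by
  simp only [IsPathFrom, IsWalk, List.forall_mem_cons, List.head?_cons, Option.mem_def,
    Option.some.injEq, forall_eq']
  constructor
  · rintro ⟨⟨⟨he, hp⟩, hchain⟩, rfl⟩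
    obtain ⟨hhead, htail⟩ := List.isChain_cons.1 hchain
    exact ⟨he, rfl, ⟨hp, htail⟩, fun b hb => (hhead b hb).symm⟩
  · rintro ⟨he, rfl, ⟨hp, htail⟩, hhead⟩
    exact ⟨⟨⟨he, hp⟩, List.isChain_cons.2 ⟨fun b hb => (hhead b hb).symm, htail⟩⟩, rfl⟩

variable {G}

lemma IsPathFrom.start_unique {v w : V} {p : List (V × V)} (hv : G.IsPathFrom v p)
    (hw : G.IsPathFrom w p) (hp : p ≠ []) : v = w := by
  obtain ⟨b, s, rfl⟩ := List.exists_cons_of_ne_nil hp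
  exact (hv.2 b rfl).symm.trans (hw.2 b rfl)

lemma IsPathFrom.layer_add_length {v : V} {p : List (V × V)} {g : V × V}
    (h : G.IsPathFrom v p) (hg : p.getLast? = some g) :
    G.layer v + p.length = G.layer g.1 + 1 := by
  induction p generalizing v with
  | nil => simp at hg
  | cons e p ih =>
    obtain ⟨he, rfl, hp⟩ := G.isPathFrom_cons.1 h
    cases p with
    | nil => simp_all
    | cons b s =>
      have := ih hp (by simpa using hg)
      have := G.edge_layer e he
      simp only [List.length_cons] at *
      omega

variable (G)

def pathsFromLayer (j : ℕ) (f : V × V) : Set (List (V × V)) :=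
  {p | ∃ v, G.layer v = j ∧ G.IsPathFrom v p ∧ p.getLast? = some f}

variable {G}

lemma length_of_mem_pathsFromLayer {j : ℕ} {f : V × V} {p : List (V × V)}
    (hp : p ∈ G.pathsFromLayer j f) : j + p.length = G.layer f.1 + 1 := by
  obtain ⟨v, rfl, hvp, hpf⟩ := hp
  exact hvp.layer_add_length hpf

variable (G)

lemma pathsFromLayer_finite (j : ℕ) (f : V × V) : (G.pathsFromLayer j f).Finite :=
  (List.finite_length_le (V × V) (G.layer f.1 + 1)).subset fun _ hp => by
    have := length_of_mem_pathsFromLayer hp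
    simp only [Set.mem_ofPred_eq]
    omega

lemma pathsFromLayer_zero (f : V × V) : G.pathsFromLayer 0 f = G.Qe f := by
  ext p
  simp only [pathsFromLayer, Qe, IsPath, G.layer_root, Set.mem_ofPred_eq, exists_eq_left]

lemma pathsFromLayer_layer {f : V × V} (hf : f ∈ G.E) :
    G.pathsFromLayer (G.layer f.1) f = {[f]} := by
  ext p
  constructor
  · intro hp
    have hlen := length_of_mem_pathsFromLayer hp
    obtain ⟨-, -, -, hpf⟩ := hp
    obtain ⟨a, rfl⟩ := List.length_eq_one_iff.1 (by omega : p.length = 1)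
    simpa using hpf
  · rintro rfl
    exact ⟨f.1, rfl, G.isPathFrom_cons.2 ⟨hf, rfl, G.isPathFrom_nil _⟩, rfl⟩

variable {G}

lemma tail_mem_pathsFromLayer_succ {j : ℕ} {f : V × V} (hj : j < G.layer f.1)
    {p : List (V × V)} (hp : p ∈ G.pathsFromLayer j f) :
    p.tail ∈ G.pathsFromLayer (j + 1) f := by
  have hlen := length_of_mem_pathsFromLayer hp
  obtain ⟨v, rfl, hvp, hpf⟩ := hp
  obtain ⟨e, b, s, rfl⟩ : ∃ e b s, p = e :: b :: s := by
    rcases p with _ | ⟨e, _ | ⟨b, s⟩⟩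
    · simp at hpf
    · simp at hlen; omega
    · exact ⟨e, b, s, rfl⟩
  obtain ⟨he, rfl, htail⟩ := G.isPathFrom_cons.1 hvp
  exact ⟨e.2, G.edge_layer e he, htail, by simpa using hpf⟩

lemma cons_mem_pathsFromLayer_iff {j : ℕ} {f e : V × V} {v : V} {q : List (V × V)}
    (hv : G.layer v = j + 1) (hvq : G.IsPathFrom v q) (hqf : q.getLast? = some f) :
    e :: q ∈ G.pathsFromLayer j f ↔ e ∈ G.inEdges v := by
  have hq : q ≠ [] := by rintro rfl; simp at hqf
  have hlast : (e :: q).getLast? = some f := by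
    simp [List.getLast?_cons, hqf]
  simp only [pathsFromLayer, inEdges, Finset.mem_filter, Set.mem_ofPred_eq, isPathFrom_cons]
  constructor
  · rintro ⟨_, -, ⟨he, -, heq⟩, -⟩
    exact ⟨he, heq.start_unique hvq hq⟩
  · rintro ⟨he, rfl⟩
    exact ⟨e.1, by have := G.edge_layer e he; omega, ⟨he, rfl, hvq⟩, hlast⟩

lemma sum_pathsFromLayer_le_succ (y : V × V → ℝ) {j : ℕ} {f : V × V} (hj : j < G.layer f.1)
    (hin : ∀ v, G.layer v = j + 1 → ∀ q, G.IsPathFrom v q → q.getLast? = some f →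
      (∑ e ∈ G.inEdges v, y e) * pathProd y q ≤ pathProd y q) :
    ∑ᶠ p ∈ G.pathsFromLayer j f, pathProd y p ≤
      ∑ᶠ q ∈ G.pathsFromLayer (j + 1) f, pathProd y q := by
  set P := (G.pathsFromLayer_finite j f).toFinset
  set P' := (G.pathsFromLayer_finite (j + 1) f).toFinset
  have hfiber : ∀ q ∈ P', ∑ p ∈ P with p.tail = q, pathProd y p ≤ pathProd y q := by
    intro q hq
    obtain ⟨v, hv, hvq, hqf⟩ := (Set.Finite.mem_toFinset _).1 hq
    have hext : {p ∈ P | p.tail = q} = (G.inEdges v).image (· :: q) := by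
      ext p
      simp only [P, Finset.mem_filter, Finset.mem_image, Set.Finite.mem_toFinset]
      constructor
      · rintro ⟨hp, rfl⟩
        rcases p with _ | ⟨e, t⟩
        · simp at hqf
        · exact ⟨e, (cons_mem_pathsFromLayer_iff hv hvq hqf).1 hp, rfl⟩
      · rintro ⟨e, he, rfl⟩
        exact ⟨(cons_mem_pathsFromLayer_iff hv hvq hqf).2 he, rfl⟩
    rw [hext, Finset.sum_image fun _ _ _ _ h => (List.cons.inj h).1]
    simp only [pathProd_cons, ← Finset.sum_mul]
    exact hin v hv q hvq hqf
  rw [finsum_mem_eq_finite_toFinset_sum _ (G.pathsFromLayer_finite j f),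
    finsum_mem_eq_finite_toFinset_sum _ (G.pathsFromLayer_finite (j + 1) f)]
  calc ∑ p ∈ P, pathProd y p = ∑ q ∈ P', ∑ p ∈ P with p.tail = q, pathProd y p :=
        (Finset.sum_fiberwise_of_maps_to (fun p hp => by
          simpa [P'] using tail_mem_pathsFromLayer_succ hj ((Set.Finite.mem_toFinset _).1 hp)) _).symm
    _ ≤ ∑ q ∈ P', pathProd y q := Finset.sum_le_sum hfiber

end LayeredDST

theorem sum_over_Qe_le_general
    (V : Type) [Fintype V] [DecidableEq V] (G : LayeredDST V)
    (y : V × V → ℝ)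
    (f : V × V) (hf : f ∈ G.E)
    (hSA : ∀ v' : V, 0 < G.layer v' → G.layer v' ≤ G.layer f.1 →
      ∀ p'' : List (V × V), G.IsPathFrom v' p'' → p''.getLast? = some f →
        (∑ e' ∈ G.inEdges v', y e') * pathProd y p'' ≤ pathProd y p'') :
    (∑ᶠ p ∈ G.Qe f, pathProd y p) ≤ y f := by
  have hmono : MonotoneOn (fun j => ∑ᶠ p ∈ G.pathsFromLayer j f, pathProd y p)
      (Set.Iic (G.layer f.1)) :=
    monotoneOn_of_le_succ Set.ordConnected_Iic fun j _ _ hj => by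
      rw [Set.mem_Iic, Order.succ_eq_add_one] at hj
      exact LayeredDST.sum_pathsFromLayer_le_succ y hj fun v hv => hSA v (by omega) (by omega)
  calc ∑ᶠ p ∈ G.Qe f, pathProd y p = ∑ᶠ p ∈ G.pathsFromLayer 0 f, pathProd y p := by
        rw [G.pathsFromLayer_zero]
    _ ≤ ∑ᶠ p ∈ G.pathsFromLayer (G.layer f.1) f, pathProd y p :=
        hmono (Set.mem_Iic.2 (Nat.zero_le _)) Set.self_mem_Iic (Nat.zero_le _)
    _ = y f := by simp [G.pathsFromLayer_layer hf, pathProd]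

/-- Fix an edge `f = uv ∈ E` with `u ∈ V_i`. If the nonnegative
vector `y` satisfies, for every `0 < i' ≤ i`, every `v' ∈ V_{i'}` and every
directed path `p''` starting at `v'` and ending with the edge `f`, the inequality
`(∑_{e' ∈ δ^in(v')} y_{e'}) · ∏_{e'' ∈ p''} y_{e''} ≤ ∏_{e'' ∈ p''} y_{e''}`,
then `∑_{p ∈ Q(f)} ∏_{e ∈ p} y_e ≤ y_f`. -/
theorem sum_over_Qe_le
    (V : Type) [Fintype V] [DecidableEq V] (G : LayeredDST V)
    (y : V × V → ℝ) (hy : ∀ e ∈ G.E, 0 ≤ y e)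
    (f : V × V) (hf : f ∈ G.E)
    (hSA : ∀ v' : V, 0 < G.layer v' → G.layer v' ≤ G.layer f.1 →
      ∀ p'' : List (V × V), G.IsPathFrom v' p'' → p''.getLast? = some f →
        (∑ e' ∈ G.inEdges v', y e') * pathProd y p'' ≤ pathProd y p'') :
    (∑ᶠ p ∈ G.Qe f, pathProd y p) ≤ y f :=
  sum_over_Qe_le_general V G y f hf hSA
end

section
/- Let G = (V,E) be an ℓ-layered DST instance and let y : E → ℝ be nonnegative with Σ_{e ∈ δ^in(v)} y_e ≤ 1 for every v ∈ V \ {r}. Then for every v ∈ V, Σ_{p ∈ Q(v)} Π_{e ∈ p} y_e ≤ 1, and consequently for every edge f ∈ E, Σ_{p ∈ Q(f)} Π_{e ∈ p} y_e ≤ y_f. -/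
/-!
Peeling off the last edge of a path from the root to `v ≠ r` splits `Q(v)` into the disjoint
sets `Q(f)`, `f ∈ δ^in(v)`, and `Q(f)` is in bijection with `Q(tail f)` via `q ↦ q ++ [f]`.
Hence `∑_{Q(v)} = ∑_{f ∈ δ^in(v)} y_f · ∑_{Q(tail f)}`, and `∑_{Q(v)} ≤ 1` follows by
induction on the layer of `v`, since the tail of an edge lies one layer below its head.
-/

namespace LayeredDST

variable {V : Type} [Fintype V] [DecidableEq V] (G : LayeredDST V)

lemma isPath_iff_isChain_cons (p : List (V × V)) :
    G.IsPath p ↔ (∀ e ∈ p, e ∈ G.E) ∧ ((G.r, G.r) :: p).IsChain (fun e f => e.2 = f.1) := by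
  simp only [IsPath, IsPathFrom, IsWalk, List.isChain_cons, eq_comm (a := G.r)]
  tauto

lemma pathEnd_eq_getLast?_getD (p : List (V × V)) :
    G.pathEnd p = (p.getLast?.getD (G.r, G.r)).2 := by
  unfold pathEnd
  cases p.getLast? <;> rfl

lemma pathEnd_concat (q : List (V × V)) (f : V × V) : G.pathEnd (q ++ [f]) = f.2 := by
  simp [pathEnd]

lemma isPath_concat_iff {q : List (V × V)} {f : V × V} :
    G.IsPath (q ++ [f]) ↔ G.IsPath q ∧ f ∈ G.E ∧ G.pathEnd q = f.1 := by
  simp only [isPath_iff_isChain_cons, ← List.cons_append, List.isChain_append,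
    List.isChain_singleton, List.getLast?_cons, List.head?_cons, Option.mem_def,
    Option.some.injEq, forall_eq', pathEnd_eq_getLast?_getD, List.mem_append,
    List.mem_singleton, or_imp, forall_and, forall_eq, true_and]
  tauto

lemma layer_pathEnd {p : List (V × V)} (hp : G.IsPath p) : G.layer (G.pathEnd p) = p.length := by
  induction p using List.reverseRecOn with
  | nil => exact (G.layer_root G.r).2 rfl
  | append_singleton q f ih =>
    obtain ⟨hq, hf, hend⟩ := G.isPath_concat_iff.1 hp
    rw [G.pathEnd_concat, G.edge_layer f hf, ← hend, ih hq, List.length_append,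
      List.length_singleton]

lemma Qv_finite (v : V) : (G.Qv v).Finite :=
  (List.finite_length_eq (V × V) (G.layer v)).subset fun _ ⟨hp, hend⟩ =>
    hend ▸ (G.layer_pathEnd hp).symm

lemma Qe_subset_Qv (f : V × V) : G.Qe f ⊆ G.Qv f.2 := fun _ ⟨hp, hlast⟩ =>
  ⟨hp, by simp [pathEnd, hlast]⟩

lemma Qe_finite (f : V × V) : (G.Qe f).Finite := (G.Qv_finite f.2).subset (G.Qe_subset_Qv f)

lemma Qv_root : G.Qv G.r = {[]} := by
  ext p
  refine ⟨fun ⟨hp, hend⟩ => ?_,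
    fun hp => ⟨hp ▸ (G.isPath_iff_isChain_cons []).2 (by simp), hp ▸ rfl⟩⟩
  have hlen := G.layer_pathEnd hp
  rw [hend, (G.layer_root G.r).2 rfl] at hlen
  exact List.length_eq_zero_iff.1 hlen.symm

lemma Qe_eq_image {f : V × V} (hf : f ∈ G.E) : G.Qe f = (· ++ [f]) '' G.Qv f.1 := by
  ext p
  constructor
  · rintro ⟨hp, hlast⟩
    obtain ⟨q, rfl⟩ : ∃ q, p = q ++ [f] := List.getLast?_eq_some_iff.1 hlast
    obtain ⟨hq, -, hend⟩ := G.isPath_concat_iff.1 hp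
    exact ⟨q, ⟨hq, hend⟩, rfl⟩
  · rintro ⟨q, ⟨hq, hend⟩, rfl⟩
    exact ⟨G.isPath_concat_iff.2 ⟨hq, hf, hend⟩, List.getLast?_concat⟩

lemma Qv_eq_biUnion_Qe {v : V} (hv : v ≠ G.r) :
    G.Qv v = ⋃ f ∈ (G.inEdges v : Set (V × V)), G.Qe f := by
  ext p
  simp only [Set.mem_iUnion, inEdges, Finset.coe_filter, Set.mem_ofPred_eq, exists_prop]
  constructor
  · rintro ⟨hp, hend⟩
    induction p using List.reverseRecOn with
    | nil => exact absurd hend.symm hv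
    | append_singleton q f =>
      rw [G.pathEnd_concat] at hend
      exact ⟨f, ⟨(G.isPath_concat_iff.1 hp).2.1, hend⟩, hp, List.getLast?_concat⟩
  · rintro ⟨f, ⟨-, rfl⟩, hpf⟩
    exact G.Qe_subset_Qv f hpf

lemma pairwiseDisjoint_Qe (s : Set (V × V)) : s.PairwiseDisjoint G.Qe :=
  fun _ _ _ _ hfg => Set.disjoint_left.2 fun _ ⟨_, hpf⟩ ⟨_, hpg⟩ =>
    hfg (Option.some.inj (hpf.symm.trans hpg))

variable (y : V × V → ℝ)

lemma sum_Qv_root : ∑ᶠ p ∈ G.Qv G.r, pathProd y p = 1 := by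
  rw [G.Qv_root, finsum_mem_singleton]
  rfl

lemma sum_Qv_eq_sum_inEdges {v : V} (hv : v ≠ G.r) :
    ∑ᶠ p ∈ G.Qv v, pathProd y p = ∑ f ∈ G.inEdges v, ∑ᶠ p ∈ G.Qe f, pathProd y p := by
  rw [G.Qv_eq_biUnion_Qe hv, finsum_mem_biUnion (G.pairwiseDisjoint_Qe _)
    (G.inEdges v).finite_toSet (fun f _ => G.Qe_finite f), finsum_mem_coe_finset]

lemma sum_Qe_eq_mul {f : V × V} (hf : f ∈ G.E) :
    ∑ᶠ p ∈ G.Qe f, pathProd y p = (∑ᶠ q ∈ G.Qv f.1, pathProd y q) * y f := by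
  rw [G.Qe_eq_image hf, finsum_mem_image fun _ _ _ _ h => List.append_left_injective [f] h,
    finsum_mem_eq_finite_toFinset_sum _ (G.Qv_finite f.1),
    finsum_mem_eq_finite_toFinset_sum _ (G.Qv_finite f.1), Finset.sum_mul]
  simp [pathProd]

variable {y}

lemma sum_Qe_le {f : V × V} (hf : f ∈ G.E) (hy : 0 ≤ y f)
    (h : ∑ᶠ q ∈ G.Qv f.1, pathProd y q ≤ 1) : ∑ᶠ p ∈ G.Qe f, pathProd y p ≤ y f := by
  rw [G.sum_Qe_eq_mul y hf]
  exact mul_le_of_le_one_left hy h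

lemma sum_Qv_le_one (hy : ∀ e ∈ G.E, 0 ≤ y e)
    (hdeg : ∀ v : V, v ≠ G.r → ∑ e ∈ G.inEdges v, y e ≤ 1) (v : V) :
    ∑ᶠ p ∈ G.Qv v, pathProd y p ≤ 1 := by
  induction hn : G.layer v generalizing v with
  | zero => rw [(G.layer_root v).1 hn, G.sum_Qv_root]
  | succ n ih =>
    have hv : v ≠ G.r := fun hvr => by simp [hvr, (G.layer_root G.r).2] at hn
    rw [G.sum_Qv_eq_sum_inEdges y hv]
    refine (Finset.sum_le_sum fun f hf => ?_).trans (hdeg v hv)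
    obtain ⟨hfE, rfl⟩ := Finset.mem_filter.1 hf
    exact G.sum_Qe_le hfE (hy f hfE) (ih f.1 (by have := G.edge_layer f hfE; omega))

end LayeredDST

/-- If `y ≥ 0` and `∑_{e ∈ δ^in(v)} y_e ≤ 1` for every vertex
`v ≠ r`, then `∑_{p ∈ Q(v)} ∏_{e ∈ p} y_e ≤ 1` for every vertex `v`, and
consequently `∑_{p ∈ Q(f)} ∏_{e ∈ p} y_e ≤ y_f` for every edge `f ∈ E`. -/
theorem sum_pathProd_le_one
    (V : Type) [Fintype V] [DecidableEq V] (G : LayeredDST V)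
    (y : V × V → ℝ) (hy : ∀ e ∈ G.E, 0 ≤ y e)
    (hdeg : ∀ v : V, v ≠ G.r → (∑ e ∈ G.inEdges v, y e) ≤ 1) :
    (∀ v : V, (∑ᶠ p ∈ G.Qv v, pathProd y p) ≤ 1) ∧
    (∀ f ∈ G.E, (∑ᶠ p ∈ G.Qe f, pathProd y p) ≤ y f) :=
  ⟨G.sum_Qv_le_one hy hdeg, fun f hf => G.sum_Qe_le hf (hy f hf) (G.sum_Qv_le_one hy hdeg f.1)⟩
end

section
/- Let G = (V,E) be an ℓ-layered DST instance, fix a terminal t ∈ T, and let y : E → ℝ be nonnegative with Σ_{e ∈ δ^in(t)} y_e ≥ 1. Suppose that for every 0 < i' < ℓ, every v' ∈ V_{i'}, every edge f ∈ δ^out(v') and every directed path p'' that starts with the edge f and ends at t, one has (Σ_{e' ∈ δ^in(v')} y_{e'}) · Π_{e'' ∈ p''} y_{e''} ≥ Π_{e'' ∈ p''} y_{e''}. Then Σ_{p ∈ Q(t)} Π_{e ∈ p} y_e ≥ 1. -/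
/-!
A path from the root to `t` has exactly `layer t` edges, so `Q(t)` is the set of walks of length
`layer t` ending at `t`. Let `S k` be the sum of `∏ y` over the walks of length `k` ending at `t`.
Extending such walks by one edge at the front gives
`S (k + 1) = ∑_p (∑_{e ∈ δ^in(start p)} y_e) · ∏_{e ∈ p} y_e`. For `0 < k < layer t` the start of
`p` lies in an inner layer, so the hypothesis makes every summand at least `∏_{e ∈ p} y_e`,
which gives `S k ≤ S (k + 1)`. Since `S 1 = ∑_{e ∈ δ^in(t)} y_e ≥ 1`, it follows that
`S (layer t) ≥ 1`.
-/

namespace LayeredDST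

variable {V : Type} [Fintype V] [DecidableEq V] (G : LayeredDST V)

def walkStart (t : V) (p : List (V × V)) : V := p.head?.elim t Prod.fst

def IsWalkTo (t : V) (p : List (V × V)) : Prop :=
  G.IsWalk p ∧ ∀ e ∈ p.getLast?, e.2 = t

def walksTo (t : V) : ℕ → Finset (List (V × V))
  | 0 => {[]}
  | k + 1 => (walksTo t k).biUnion fun p => (G.inEdges (walkStart t p)).image (· :: p)

variable {G}

lemma isWalk_iff {p : List (V × V)} :
    G.IsWalk p ↔ (∀ e ∈ p, e ∈ G.E) ∧ p.IsChain (fun e f => e.2 = f.1) :=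
  Iff.rfl

lemma mem_inEdges {v : V} {e : V × V} : e ∈ G.inEdges v ↔ e ∈ G.E ∧ e.2 = v :=
  Finset.mem_filter

lemma mem_outEdges {v : V} {e : V × V} : e ∈ G.outEdges v ↔ e ∈ G.E ∧ e.1 = v :=
  Finset.mem_filter

lemma layer_pos_of_mem_inEdges {v : V} {e : V × V} (he : e ∈ G.inEdges v) : 0 < G.layer v := by
  obtain ⟨heE, rfl⟩ := mem_inEdges.1 he
  simp [G.edge_layer e heE]

lemma isWalkTo_nil (t : V) : G.IsWalkTo t [] := ⟨isWalk_iff.2 ⟨by simp, List.isChain_nil⟩, by simp⟩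

lemma isWalkTo_cons {t : V} {e : V × V} {p : List (V × V)} :
    G.IsWalkTo t (e :: p) ↔ e ∈ G.inEdges (walkStart t p) ∧ G.IsWalkTo t p := by
  cases p with
  | nil => simp [IsWalkTo, isWalk_iff, walkStart, mem_inEdges]
  | cons f p =>
    simp only [IsWalkTo, isWalk_iff, walkStart, mem_inEdges, List.mem_cons, forall_eq_or_imp,
      List.isChain_cons_cons, List.getLast?_cons_cons, List.head?_cons, Option.elim_some]
    tauto

lemma mem_walksTo_iff {t : V} {k : ℕ} {p : List (V × V)} :
    p ∈ G.walksTo t k ↔ G.IsWalkTo t p ∧ p.length = k := by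
  induction k generalizing p with
  | zero =>
    simp only [walksTo, Finset.mem_singleton, List.length_eq_zero_iff]
    exact ⟨fun h => ⟨h ▸ isWalkTo_nil t, h⟩, And.right⟩
  | succ k ih =>
    cases p with
    | nil => simp [walksTo]
    | cons e p =>
      simp only [walksTo, Finset.mem_biUnion, Finset.mem_image, List.cons.injEq, ih,
        isWalkTo_cons, List.length_cons, Nat.add_right_cancel_iff]
      constructor
      · rintro ⟨p, ⟨hp, rfl⟩, e, he, rfl, rfl⟩
        exact ⟨⟨he, hp⟩, rfl⟩
      · rintro ⟨⟨he, hp⟩, rfl⟩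
        exact ⟨p, ⟨hp, rfl⟩, e, he, rfl, rfl⟩

lemma IsWalkTo.layer_walkStart_add_length {t : V} {p : List (V × V)} (hp : G.IsWalkTo t p) :
    G.layer (walkStart t p) + p.length = G.layer t := by
  induction p with
  | nil => rfl
  | cons e p ih =>
    obtain ⟨he, hp⟩ := isWalkTo_cons.1 hp
    obtain ⟨heE, hend⟩ := mem_inEdges.1 he
    have hlayer := G.edge_layer e heE
    rw [hend] at hlayer
    have := ih hp
    simp only [walkStart, List.head?_cons, Option.elim_some, List.length_cons]
    omega

lemma walkStart_eq_root_iff {t : V} {p : List (V × V)} (hp : G.IsWalkTo t p) :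
    walkStart t p = G.r ↔ p.length = G.layer t := by
  rw [← G.layer_root, ← hp.layer_walkStart_add_length]
  omega

theorem Qv_eq_walksTo (t : V) : G.Qv t = G.walksTo t (G.layer t) := by
  ext p
  simp only [Qv, IsPath, IsPathFrom, Set.mem_ofPred_eq, Finset.mem_coe, mem_walksTo_iff]
  cases p with
  | nil =>
    simp [pathEnd, isWalkTo_nil, (isWalkTo_nil (G := G) t).1, eq_comm (a := 0), G.layer_root,
      eq_comm (a := G.r)]
  | cons e p =>
    have hend : G.pathEnd (e :: p) = ((e :: p).getLast (List.cons_ne_nil _ _)).2 := by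
      simp [pathEnd, List.getLast?_eq_some_getLast]
    rw [hend]
    constructor
    · rintro ⟨⟨hwalk, hroot⟩, hlast⟩
      have hp : G.IsWalkTo t (e :: p) := ⟨hwalk, by simp [List.getLast?_eq_some_getLast, hlast]⟩
      exact ⟨hp, (walkStart_eq_root_iff hp).1 (hroot e rfl)⟩
    · rintro ⟨hp, hlen⟩
      refine ⟨⟨hp.1, ?_⟩, hp.2 _ (by simp [List.getLast?_eq_some_getLast])⟩
      simpa [walkStart] using (walkStart_eq_root_iff hp).2 hlen

theorem sum_walksTo_succ (y : V × V → ℝ) (t : V) (k : ℕ) :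
    ∑ p ∈ G.walksTo t (k + 1), pathProd y p =
      ∑ p ∈ G.walksTo t k, (∑ e ∈ G.inEdges (walkStart t p), y e) * pathProd y p := by
  rw [walksTo, Finset.sum_biUnion]
  · refine Finset.sum_congr rfl fun p _ => ?_
    rw [Finset.sum_image fun _ _ _ _ h => (List.cons.inj h).1, Finset.sum_mul]
    simp [pathProd]
  · intro p _ q _ hpq
    simp only [Function.onFun, Finset.disjoint_left, Finset.mem_image]
    rintro _ ⟨e, -, rfl⟩ ⟨f, -, h⟩
    exact hpq (List.cons.inj h).2.symm

end LayeredDST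

theorem one_le_sum_over_Qt_general
    (V : Type) [Fintype V] [DecidableEq V] (G : LayeredDST V)
    (t : V)
    (y : V × V → ℝ)
    (hterm : 1 ≤ ∑ e ∈ G.inEdges t, y e)
    (hSA : ∀ v' : V, 0 < G.layer v' → G.layer v' < G.ℓ →
      ∀ f ∈ G.outEdges v', ∀ p'' : List (V × V), G.IsWalk p'' →
        p''.head? = some f → (∀ e ∈ p''.getLast?, e.2 = t) →
        pathProd y p'' ≤ (∑ e' ∈ G.inEdges v', y e') * pathProd y p'') :
    1 ≤ ∑ᶠ p ∈ G.Qv t, pathProd y p := by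
  have hstep (k : ℕ) (hk : 0 < k) (hkt : k < G.layer t) :
      ∑ p ∈ G.walksTo t k, pathProd y p ≤ ∑ p ∈ G.walksTo t (k + 1), pathProd y p := by
    rw [LayeredDST.sum_walksTo_succ]
    refine Finset.sum_le_sum fun p hmem => ?_
    obtain ⟨hp, rfl⟩ := LayeredDST.mem_walksTo_iff.1 hmem
    obtain ⟨f, p, rfl⟩ := List.exists_cons_of_length_pos hk
    have hlayer := hp.layer_walkStart_add_length
    have hf : f ∈ G.outEdges f.1 := LayeredDST.mem_outEdges.2 ⟨hp.1.1 f (by simp), rfl⟩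
    simp only [LayeredDST.walkStart, List.head?_cons, Option.elim_some, List.length_cons]
      at hlayer hkt ⊢
    exact hSA f.1 (by omega) (by have := G.layer_le t; omega) f hf _ hp.1 rfl hp.2
  have hchain (k : ℕ) (hk : 0 < k) (hkt : k ≤ G.layer t) :
      1 ≤ ∑ p ∈ G.walksTo t k, pathProd y p := by
    induction k, hk using Nat.le_induction with
    | base => simpa [LayeredDST.sum_walksTo_succ, LayeredDST.walksTo, LayeredDST.walkStart,
        pathProd] using hterm
    | succ k hk ih => exact (ih (by omega)).trans (hstep k hk hkt)
  obtain ⟨e, he, -⟩ :=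
    Finset.exists_ne_zero_of_sum_ne_zero (by linarith : ∑ e ∈ G.inEdges t, y e ≠ 0)
  rw [LayeredDST.Qv_eq_walksTo, finsum_mem_coe_finset]
  exact hchain _ (LayeredDST.layer_pos_of_mem_inEdges he) le_rfl

/-- Fix a terminal `t ∈ T` and let `y ≥ 0` satisfy
`∑_{e ∈ δ^in(t)} y_e ≥ 1`. If moreover, for every `0 < i' < ℓ`, every
`v' ∈ V_{i'}`, every edge `f ∈ δ^out(v')` and every directed path `p''`
starting with the edge `f` and ending at `t`, one has
`(∑_{e' ∈ δ^in(v')} y_{e'}) · ∏_{e'' ∈ p''} y_{e''} ≥ ∏_{e'' ∈ p''} y_{e''}`,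
then `∑_{p ∈ Q(t)} ∏_{e ∈ p} y_e ≥ 1`. -/
theorem one_le_sum_over_Qt
    (V : Type) [Fintype V] [DecidableEq V] (G : LayeredDST V)
    (t : V) (ht : t ∈ G.T)
    (y : V × V → ℝ) (hy : ∀ e ∈ G.E, 0 ≤ y e)
    (hterm : 1 ≤ ∑ e ∈ G.inEdges t, y e)
    (hSA : ∀ v' : V, 0 < G.layer v' → G.layer v' < G.ℓ →
      ∀ f ∈ G.outEdges v', ∀ p'' : List (V × V), G.IsWalk p'' →
        p''.head? = some f → (∀ e ∈ p''.getLast?, e.2 = t) →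
        pathProd y p'' ≤ (∑ e' ∈ G.inEdges v', y e') * pathProd y p'') :
    1 ≤ ∑ᶠ p ∈ G.Qv t, pathProd y p :=
  one_le_sum_over_Qt_general V G t y hterm hSA
end
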